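/- arXiv:0705.0170 — 5 statements merged into one kernel-verified Lean document; each statement's English description precedes it below -/
import Mathlib

section
/- Let n ≥ 2 and let M be the real n×n matrix with M_{ii} = 1 for 1 ≤ i ≤ n−1, M_{in} = 1/2 for 1 ≤ i ≤ n, and all other entries 0. If B is an integer n×n matrix with determinant 1 that is congruent to the identity matrix modulo 2 (i.e., B = Id + B′ where every entry of B′ is even), then the conjugate M B M⁻¹ has integer entries. -/
/-- The matrix `M` with `M i i = 1` for `i` in the upper-left `(n-1) × (n-1)` block,
last column constantly `1/2`, and all other entries `0`. -/
noncomputable def Mmat (n : ℕ) : Matrix (Fin n) (Fin n) ℝ :=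
  Matrix.of fun i j => if (j : ℕ) = n - 1 then 1 / 2 else if i = j then 1 else 0

/-- Integer matrix equal to `2 • Mmat n`. -/
def Pmat (n : ℕ) : Matrix (Fin n) (Fin n) ℤ :=
  Matrix.of fun i j => if (j : ℕ) = n - 1 then 1 else if i = j then 2 else 0

/-- Integer matrix whose real cast is the inverse of `Mmat n`. -/
def Nmat (n : ℕ) : Matrix (Fin n) (Fin n) ℤ :=
  Matrix.of fun i j => if (j : ℕ) = n - 1 then (if i = j then 2 else -1)
    else if i = j then 1 else 0

lemma hMN {n : ℕ} (hn : 2 ≤ n) :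
    Mmat n * (Nmat n).map (Int.cast : ℤ → ℝ) = 1 := by
  have hlt : n - 1 < n := by omega
  set ℓ : Fin n := ⟨n - 1, hlt⟩ with hℓ
  have hcoe : ∀ k : Fin n, ((k : ℕ) = n - 1) ↔ k = ℓ := by
    intro k; rw [Fin.ext_iff]
  ext i j
  rw [Matrix.mul_apply]
  simp only [Mmat, Nmat, Matrix.map_apply, Matrix.of_apply, hcoe, Matrix.one_apply]
  by_cases hj : j = ℓ
  · subst hj
    simp only [if_pos rfl, if_true]
    have key : ∀ k : Fin n,
        (if k = ℓ then (1:ℝ)/2 else if i = k then 1 else 0) *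
          ((if k = ℓ then (2:ℤ) else -1 : ℤ) : ℝ)
        = (if k = ℓ then 1 else 0) - (if k = i ∧ ¬ k = ℓ then 1 else 0) := by
      intro k
      rcases eq_or_ne k ℓ with hk | hk
      · subst hk; simp
      · by_cases hi : i = k
        · subst hi; simp [hk]
        · simp [hk, hi, Ne.symm hi]
    rw [Finset.sum_congr rfl fun k _ => key k, Finset.sum_sub_distrib]
    have h2 : (∑ k : Fin n, (if k = i ∧ ¬ k = ℓ then (1:ℝ) else 0))
        = if i = ℓ then 0 else 1 := by
      rcases eq_or_ne i ℓ with hi | hi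
      · subst hi; simp
      · have : ∀ k : Fin n, (if k = i ∧ ¬ k = ℓ then (1:ℝ) else 0)
            = if k = i then 1 else 0 := by
          intro k
          rcases eq_or_ne k i with h | h
          · subst h; simp [hi]
          · simp [h]
        rw [Finset.sum_congr rfl fun k _ => this k]
        simp [hi]
    rw [h2]
    simp [Finset.sum_ite_eq']
    rcases eq_or_ne i ℓ with hi | hi <;> simp [hi]
  · have key : ∀ k : Fin n,
        (if k = ℓ then (1:ℝ)/2 else if i = k then 1 else 0) *
          ((if k = j then (1:ℤ) else 0 : ℤ) : ℝ)
        = if k = j then (if i = j then 1 else 0) else 0 := by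
      intro k
      rcases eq_or_ne k j with h | h
      · subst h; simp [hj]
      · simp [h]
    simp only [if_neg hj] at *
    rw [Finset.sum_congr rfl fun k _ => key k]
    simp [Finset.sum_ite_eq']

lemma map_mul' {n : ℕ} (A B : Matrix (Fin n) (Fin n) ℤ) :
    ((A * B).map (Int.cast : ℤ → ℝ)) = A.map Int.cast * B.map Int.cast := by
  ext i j
  simp only [Matrix.map_apply, Matrix.mul_apply]
  push_cast
  rfl

lemma hMP {n : ℕ} :
    Mmat n = (1/2 : ℝ) • (Pmat n).map (Int.cast : ℤ → ℝ) := by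
  ext i j
  simp only [Mmat, Pmat, Matrix.smul_apply, Matrix.map_apply, Matrix.of_apply]
  split_ifs <;> norm_num

/-- If `B` is an integer matrix of determinant `1` congruent to the identity modulo `2`,
then `M B M⁻¹` has integer entries. -/
theorem conjugate_integral {n : ℕ} (hn : 2 ≤ n) (B : Matrix (Fin n) (Fin n) ℤ)
    (hdet : B.det = 1) (hcong : ∀ i j : Fin n, (2 : ℤ) ∣ (B - 1) i j) :
    ∃ C : Matrix (Fin n) (Fin n) ℤ,
      Mmat n * B.map (Int.cast : ℤ → ℝ) * (Mmat n)⁻¹ = C.map (Int.cast : ℤ → ℝ) := by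
  have hinv : (Mmat n)⁻¹ = (Nmat n).map (Int.cast : ℤ → ℝ) :=
    Matrix.inv_eq_right_inv (hMN hn)
  -- divisibility of entries of P * B * N
  have hdvd : ∀ i j : Fin n, (2 : ℤ) ∣ (Pmat n * B * Nmat n) i j := by
    have hsplit : Pmat n * B * Nmat n
        = Pmat n * Nmat n + Pmat n * (B - 1) * Nmat n := by
      noncomm_ring
    intro i j
    rw [hsplit, Matrix.add_apply]
    apply dvd_add
    · -- P * N = 2 • 1 as integer matrices
      have hcast : ((Pmat n * Nmat n).map (Int.cast : ℤ → ℝ))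
          = (2 : ℝ) • (1 : Matrix (Fin n) (Fin n) ℝ) := by
        rw [map_mul']
        have : (Pmat n).map (Int.cast : ℤ → ℝ) = (2 : ℝ) • Mmat n := by
          rw [hMP]; ext i j; simp
        rw [this, Matrix.smul_mul, hMN hn]
      have hentry := congrFun (congrFun hcast i) j
      simp only [Matrix.map_apply, Matrix.smul_apply, Matrix.one_apply, smul_eq_mul] at hentry
      by_cases hij : i = j
      · rw [if_pos hij] at hentry
        have : (Pmat n * Nmat n) i j = 2 := by exact_mod_cast (by linarith : ((Pmat n * Nmat n) i j : ℝ) = 2)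
        rw [this]
      · rw [if_neg hij] at hentry
        have : (Pmat n * Nmat n) i j = 0 := by exact_mod_cast (by linarith : ((Pmat n * Nmat n) i j : ℝ) = 0)
        rw [this]
        exact dvd_zero 2
    · rw [Matrix.mul_apply]
      apply Finset.dvd_sum
      intro l _
      rw [Matrix.mul_apply, Finset.sum_mul]
      apply Finset.dvd_sum
      intro k _
      exact Dvd.dvd.mul_right (Dvd.dvd.mul_left (hcong k l) _) _
  -- define C
  refine ⟨Matrix.of fun i j => (Pmat n * B * Nmat n) i j / 2, ?_⟩
  have hC : ((2 : ℤ) • Matrix.of fun i j => (Pmat n * B * Nmat n) i j / 2)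
      = Pmat n * B * Nmat n := by
    ext i j
    simpa using Int.mul_ediv_cancel' (hdvd i j)
  rw [hinv, hMP]
  calc ((1/2 : ℝ) • (Pmat n).map (Int.cast : ℤ → ℝ)) * B.map _ * (Nmat n).map _
      = (1/2 : ℝ) • ((Pmat n * B * Nmat n).map (Int.cast : ℤ → ℝ)) := by
        rw [Matrix.smul_mul, Matrix.smul_mul, map_mul', map_mul']
    _ = (1/2 : ℝ) • (((2 : ℤ) • Matrix.of fun i j => (Pmat n * B * Nmat n) i j / 2).map
          (Int.cast : ℤ → ℝ)) := by rw [hC]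
    _ = (Matrix.of fun i j => (Pmat n * B * Nmat n) i j / 2).map (Int.cast : ℤ → ℝ) := by
        ext i j
        simp only [Matrix.smul_apply, Matrix.map_apply, smul_eq_mul, Matrix.of_apply]
        push_cast
        ring
end

section
/- Let n ≥ 2 and let A = 2^{1/n}·M, where M is the real n×n matrix with M_{ii} = 1 for 1 ≤ i ≤ n−1, M_{in} = 1/2 for 1 ≤ i ≤ n, and all other entries 0 (so det A = 1). Then for every integer vector v ∈ ℤⁿ whose last coordinate vₙ is odd, one has ‖Av‖ ≥ 2^{1/n}·√n/2. -/
/-- The Euclidean norm of a vector in `ℝⁿ`. -/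
noncomputable def eNorm {n : ℕ} (x : Fin n → ℝ) : ℝ :=
  Real.sqrt (∑ i, (x i) ^ 2)

/-- The Euclidean norm of `A v` for an integer vector `v`. -/
noncomputable def latNorm {n : ℕ} (A : Matrix (Fin n) (Fin n) ℝ) (v : Fin n → ℤ) : ℝ :=
  eNorm (A.mulVec (fun i => (v i : ℝ)))

/-- The systole of `A`: the infimum (in fact minimum) of `‖A v‖` over nonzero
integer vectors `v ∈ ℤⁿ`. -/
noncomputable def syst {n : ℕ} (A : Matrix (Fin n) (Fin n) ℝ) : ℝ :=
  sInf {r | ∃ v : Fin n → ℤ, v ≠ 0 ∧ r = latNorm A v}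

/-- The matrix `A = 2^(1/n) • M` (which has determinant `1`). -/
noncomputable def Amat (n : ℕ) : Matrix (Fin n) (Fin n) ℝ :=
  ((2 : ℝ) ^ ((1 : ℝ) / n)) • Mmat n

/-! The `i`-th coordinate of `M v` is `vᵢ + vₙ/2` for `i < n` and `vₙ/2` for `i = n`. When `vₙ` is
odd each of them lies in `ℤ + 1/2`, so has absolute value at least `1/2`; hence `‖M v‖ ≥ √n / 2`,
and scaling by `2^(1/n)` gives the bound for `A`. -/

lemma half_le_abs_int_add_half (t : ℤ) : (1 / 2 : ℝ) ≤ |(t : ℝ) + 1 / 2| := by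
  rcases le_or_gt 0 t with ht | ht
  · have : (0 : ℝ) ≤ t := by exact_mod_cast ht
    rw [abs_of_pos (by linarith)]; linarith
  · have : (t : ℝ) ≤ -1 := by exact_mod_cast Int.le_sub_one_of_lt ht
    rw [abs_of_neg (by linarith)]; linarith

lemma eNorm_smul {n : ℕ} (c : ℝ) (x : Fin n → ℝ) : eNorm (c • x) = |c| * eNorm x := by
  simp only [eNorm, Pi.smul_apply, smul_eq_mul, mul_pow, ← Finset.mul_sum]
  rw [Real.sqrt_mul (sq_nonneg c), Real.sqrt_sq_eq_abs]

lemma sqrt_card_mul_le_eNorm {n : ℕ} {a : ℝ} (ha : 0 ≤ a) (x : Fin n → ℝ)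
    (hx : ∀ i, a ≤ |x i|) : Real.sqrt n * a ≤ eNorm x := by
  have hsum : n * a ^ 2 ≤ ∑ i, x i ^ 2 := by
    have := Finset.card_nsmul_le_sum Finset.univ (fun i => x i ^ 2) (a ^ 2)
      fun i _ => sq_abs (x i) ▸ pow_le_pow_left₀ ha (hx i) 2
    simpa using this
  calc Real.sqrt n * a = Real.sqrt (n * a ^ 2) := by
        rw [Real.sqrt_mul (Nat.cast_nonneg n), Real.sqrt_sq ha]
    _ ≤ eNorm x := Real.sqrt_le_sqrt hsum

lemma Mmat_mulVec_apply {n : ℕ} (last : Fin n) (hlast : (last : ℕ) = n - 1)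
    (x : Fin n → ℝ) (i : Fin n) :
    (Mmat n).mulVec x i = (if i = last then 0 else x i) + x last / 2 := by
  have hcol : ∀ j : Fin n, ((j : ℕ) = n - 1 ↔ j = last) := fun j => by
    rw [← hlast, Fin.val_inj]
  simp only [Matrix.mulVec, dotProduct, Mmat, Matrix.of_apply, hcol, ite_mul]
  rw [Finset.sum_ite, Finset.sum_ite]
  by_cases hi : i = last <;>
    simp [Finset.filter_eq', Finset.filter_ne', Finset.filter_eq, hi, add_comm, div_eq_inv_mul]

lemma half_le_abs_Mmat_mulVec_apply {n : ℕ} (last : Fin n) (hlast : (last : ℕ) = n - 1)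
    (v : Fin n → ℤ) (hodd : Odd (v last)) (i : Fin n) :
    1 / 2 ≤ |(Mmat n).mulVec (fun j => (v j : ℝ)) i| := by
  obtain ⟨m, hm⟩ := hodd
  rw [Mmat_mulVec_apply last hlast]
  convert half_le_abs_int_add_half ((if i = last then 0 else v i) + m) using 2
  rw [hm]
  split_ifs <;> push_cast <;> ring

/-- For `A = 2^(1/n) • M`, every integer vector whose last coordinate is odd satisfies
`‖A v‖ ≥ 2^(1/n) · √n / 2`. -/
theorem norm_ge_of_odd_last {n : ℕ} (hn : 2 ≤ n) (v : Fin n → ℤ)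
    (hodd : Odd (v ⟨n - 1, by omega⟩)) :
    (2 : ℝ) ^ ((1 : ℝ) / n) * Real.sqrt n / 2 ≤ latNorm (Amat n) v := by
  have hlatNorm : latNorm (Amat n) v =
      (2 : ℝ) ^ ((1 : ℝ) / n) * eNorm ((Mmat n).mulVec fun i => (v i : ℝ)) := by
    rw [latNorm, Amat, Matrix.smul_mulVec, eNorm_smul, abs_of_pos (by positivity)]
  have hM := sqrt_card_mul_le_eNorm (by norm_num) _
    (half_le_abs_Mmat_mulVec_apply ⟨n - 1, by omega⟩ rfl v hodd)
  rw [hlatNorm, mul_div_assoc, div_eq_mul_one_div (Real.sqrt n)]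
  exact mul_le_mul_of_nonneg_left hM (by positivity)
end

section
/- Let n ≥ 5 and let A = 2^{1/n}·M, where M is the real n×n matrix with M_{ii} = 1 for 1 ≤ i ≤ n−1, M_{in} = 1/2 for 1 ≤ i ≤ n, and all other entries 0. Then the set of nonzero integer vectors v ∈ ℤⁿ with ‖Av‖ = syst(A) consists exactly of the 2n vectors ±e₁, …, ±e_{n−1}, ±(2eₙ − (e₁ + ⋯ + e_{n−1})). -/
/-! For integer `v` with last coordinate `t`, the integer vector `2 M v` has all coordinates
`≡ t (mod 2)`. If `t` is odd, then `‖2 M v‖² ≥ n ≥ 5`. If `t` is even, then `u = M v` is itself an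
integer vector, and `M` maps the vectors with even last coordinate bijectively onto `ℤⁿ`; hence
`‖2 M v‖² = 4 ‖u‖² ≥ 4`, with equality exactly for `u = ±eⱼ`. So the systoles are the vectors
`M⁻¹(±eⱼ)`: these are `±eⱼ` for `j < n`, and `±(2eₙ − (e₁ + ⋯ + e_{n-1}))` for `j = n`. -/

open Finset Matrix

section SumSq

variable {ι : Type*} [Fintype ι]

theorem one_le_sum_sq {x : ι → ℤ} (hx : x ≠ 0) : 1 ≤ ∑ i, x i ^ 2 := by
  obtain ⟨i, hi⟩ := Function.ne_iff.mp hx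
  calc 1 ≤ x i ^ 2 := (one_le_sq_iff_one_le_abs _).mpr (Int.one_le_abs hi)
    _ ≤ ∑ j, x j ^ 2 := single_le_sum (fun j _ => sq_nonneg (x j)) (mem_univ i)

theorem card_le_sum_sq_of_odd {x : ι → ℤ} (hx : ∀ i, Odd (x i)) :
    (Fintype.card ι : ℤ) ≤ ∑ i, x i ^ 2 := by
  rw [Fintype.card_eq_sum_ones, Nat.cast_sum, Nat.cast_one]
  refine sum_le_sum fun i _ => (one_le_sq_iff_one_le_abs _).mpr (Int.one_le_abs ?_)
  obtain ⟨k, hk⟩ := hx i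
  omega

theorem sum_sq_eq_one_iff [DecidableEq ι] {x : ι → ℤ} :
    ∑ i, x i ^ 2 = 1 ↔ ∃ i, x = Pi.single i 1 ∨ x = Pi.single i (-1) := by
  constructor
  · intro h
    obtain ⟨i, hi⟩ := Function.ne_iff.mp (show x ≠ 0 by rintro rfl; simp at h)
    have hsplit := add_sum_erase univ (fun j => x j ^ 2) (mem_univ i)
    have hi1 : 1 ≤ x i ^ 2 := (one_le_sq_iff_one_le_abs _).mpr (Int.one_le_abs hi)
    have hnonneg (j : ι) (_ : j ∈ univ.erase i) : 0 ≤ x j ^ 2 := sq_nonneg (x j)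
    have hrest : ∑ j ∈ univ.erase i, x j ^ 2 = 0 := by linarith [sum_nonneg hnonneg]
    have hzero (j : ι) (hj : j ≠ i) : x j = 0 :=
      pow_eq_zero_iff two_ne_zero |>.mp <|
        (sum_eq_zero_iff_of_nonneg hnonneg).mp hrest j (mem_erase.mpr ⟨hj, mem_univ j⟩)
    have hx : x = Pi.single i (x i) := by
      ext j
      rcases eq_or_ne j i with rfl | hj
      · simp
      · simp [hj, hzero j hj]
    refine ⟨i, ?_⟩
    rcases sq_eq_one_iff.mp (show x i ^ 2 = 1 by omega) with h1 | h1 <;> rw [h1] at hx <;> simp [hx]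
  · rintro ⟨i, rfl | rfl⟩ <;> simp [Pi.single_apply]

end SumSq

theorem sq_latNorm {n : ℕ} (A : Matrix (Fin n) (Fin n) ℝ) (v : Fin n → ℤ) :
    latNorm A v ^ 2 = ∑ i, (A *ᵥ fun j => (v j : ℝ)) i ^ 2 :=
  Real.sq_sqrt (sum_nonneg fun _ _ => sq_nonneg _)

theorem latNorm_nonneg {n : ℕ} (A : Matrix (Fin n) (Fin n) ℝ) (v : Fin n → ℤ) : 0 ≤ latNorm A v :=
  Real.sqrt_nonneg _

theorem syst_eq_latNorm {n : ℕ} {A : Matrix (Fin n) (Fin n) ℝ} {v₀ : Fin n → ℤ} (hv₀ : v₀ ≠ 0)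
    (h : ∀ v, v ≠ 0 → latNorm A v₀ ≤ latNorm A v) : syst A = latNorm A v₀ :=
  IsLeast.csInf_eq ⟨⟨v₀, hv₀, rfl⟩, by rintro _ ⟨v, hv, rfl⟩; exact h v hv⟩

section Mmat

variable {m : ℕ}

def twoMmulVec (v : Fin (m + 1) → ℤ) : Fin (m + 1) → ℤ :=
  Fin.lastCases (v (Fin.last m)) fun i => 2 * v i.castSucc + v (Fin.last m)

def invMmulVec (u : Fin (m + 1) → ℤ) : Fin (m + 1) → ℤ :=
  Fin.lastCases (2 * u (Fin.last m)) fun i => u i.castSucc - u (Fin.last m)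

theorem Mmat_mulVec_intCast (v : Fin (m + 1) → ℤ) :
    Mmat (m + 1) *ᵥ (fun i => (v i : ℝ)) = fun j => (twoMmulVec v j : ℝ) / 2 := by
  have hval (i : Fin m) : (i : ℕ) ≠ m := i.isLt.ne
  ext j
  induction j using Fin.lastCases <;>
    simp [Mmat, mulVec, dotProduct, Fin.sum_univ_castSucc, twoMmulVec, hval,
      (Fin.castSucc_ne_last _).symm] <;> ring

theorem sq_latNorm_Amat (v : Fin (m + 1) → ℤ) :
    latNorm (Amat (m + 1)) v ^ 2 =
      ((2 : ℝ) ^ ((1 : ℝ) / (m + 1 : ℕ))) ^ 2 / 4 * ((∑ j, twoMmulVec v j ^ 2 : ℤ) : ℝ) := by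
  simp only [sq_latNorm, Amat, smul_mulVec, Mmat_mulVec_intCast, Pi.smul_apply, smul_eq_mul,
    Int.cast_sum, Int.cast_pow, mul_sum]
  exact sum_congr rfl fun j _ => by ring

theorem latNorm_Amat_le_iff (v w : Fin (m + 1) → ℤ) :
    latNorm (Amat (m + 1)) v ≤ latNorm (Amat (m + 1)) w ↔
      ∑ j, twoMmulVec v j ^ 2 ≤ ∑ j, twoMmulVec w j ^ 2 := by
  rw [← pow_le_pow_iff_left₀ (latNorm_nonneg _ _) (latNorm_nonneg _ _) two_ne_zero,
    sq_latNorm_Amat, sq_latNorm_Amat, mul_le_mul_iff_of_pos_left (by positivity), Int.cast_le]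

theorem twoMmulVec_invMmulVec (u : Fin (m + 1) → ℤ) (j : Fin (m + 1)) :
    twoMmulVec (invMmulVec u) j = 2 * u j := by
  induction j using Fin.lastCases <;> simp [twoMmulVec, invMmulVec]
  ring

theorem invMmulVec_injective : Function.Injective (invMmulVec (m := m)) := fun u w h =>
  funext fun j => by simpa [twoMmulVec_invMmulVec] using congrArg (twoMmulVec · j) h

theorem invMmulVec_zero : invMmulVec (0 : Fin (m + 1) → ℤ) = 0 := by
  ext j
  induction j using Fin.lastCases <;> simp [invMmulVec]

theorem exists_invMmulVec_of_even {v : Fin (m + 1) → ℤ} (hv : Even (v (Fin.last m))) :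
    ∃ u, v = invMmulVec u := by
  obtain ⟨k, hk⟩ := hv
  refine ⟨Fin.lastCases k fun i => v i.castSucc + k, funext fun j => ?_⟩
  induction j using Fin.lastCases <;> simp [invMmulVec, hk, two_mul]

theorem even_invMmulVec_last (u : Fin (m + 1) → ℤ) : Even (invMmulVec u (Fin.last m)) := by
  simp [invMmulVec]

theorem odd_twoMmulVec {v : Fin (m + 1) → ℤ} (hv : Odd (v (Fin.last m))) (j : Fin (m + 1)) :
    Odd (twoMmulVec v j) := by
  induction j using Fin.lastCases <;> simp [twoMmulVec, hv, (even_two_mul _).add_odd hv]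

theorem le_sum_sq_twoMmulVec_of_odd {v : Fin (m + 1) → ℤ} (hv : Odd (v (Fin.last m))) :
    (m + 1 : ℤ) ≤ ∑ j, twoMmulVec v j ^ 2 := by
  simpa using card_le_sum_sq_of_odd (odd_twoMmulVec hv)

theorem sum_sq_twoMmulVec_invMmulVec (u : Fin (m + 1) → ℤ) :
    ∑ j, twoMmulVec (invMmulVec u) j ^ 2 = 4 * ∑ j, u j ^ 2 := by
  simp only [twoMmulVec_invMmulVec, mul_pow, mul_sum]
  norm_num

theorem four_le_sum_sq_twoMmulVec (hm : 3 ≤ m) {v : Fin (m + 1) → ℤ} (hv : v ≠ 0) :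
    4 ≤ ∑ j, twoMmulVec v j ^ 2 := by
  rcases Int.even_or_odd (v (Fin.last m)) with heven | hodd
  · obtain ⟨u, rfl⟩ := exists_invMmulVec_of_even heven
    have hu : u ≠ 0 := by rintro rfl; exact hv invMmulVec_zero
    linarith [sum_sq_twoMmulVec_invMmulVec u, one_le_sum_sq hu]
  · linarith [le_sum_sq_twoMmulVec_of_odd hodd]

theorem sum_sq_twoMmulVec_eq_four_iff (hm : 4 ≤ m) (v : Fin (m + 1) → ℤ) :
    ∑ j, twoMmulVec v j ^ 2 = 4 ↔
      ∃ j, v = invMmulVec (Pi.single j 1) ∨ v = invMmulVec (Pi.single j (-1)) := by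
  rcases Int.even_or_odd (v (Fin.last m)) with heven | hodd
  · obtain ⟨u, rfl⟩ := exists_invMmulVec_of_even heven
    simp only [sum_sq_twoMmulVec_invMmulVec, invMmulVec_injective.eq_iff, ← sum_sq_eq_one_iff]
    omega
  · refine iff_of_false (by linarith [le_sum_sq_twoMmulVec_of_odd hodd]) ?_
    rintro ⟨j, h | h⟩ <;> exact Int.not_even_iff_odd.mpr hodd (h ▸ even_invMmulVec_last _)

theorem latNorm_Amat_eq_syst_iff (hm : 4 ≤ m) (v : Fin (m + 1) → ℤ) :
    latNorm (Amat (m + 1)) v = syst (Amat (m + 1)) ↔ ∑ j, twoMmulVec v j ^ 2 = 4 := by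
  set v₀ := invMmulVec (Pi.single (Fin.last m) 1)
  have h₀ : ∑ j, twoMmulVec v₀ j ^ 2 = 4 :=
    (sum_sq_twoMmulVec_eq_four_iff hm v₀).mpr ⟨_, .inl rfl⟩
  have hv₀ : v₀ ≠ 0 := by
    rw [Ne, ← invMmulVec_zero, invMmulVec_injective.eq_iff]
    exact Pi.single_ne_zero_iff.mpr one_ne_zero
  have hsyst : syst (Amat (m + 1)) = latNorm (Amat (m + 1)) v₀ :=
    syst_eq_latNorm hv₀ fun v hv =>
      (latNorm_Amat_le_iff v₀ v).mpr (h₀ ▸ four_le_sum_sq_twoMmulVec (by omega) hv)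
  rw [hsyst, le_antisymm_iff, latNorm_Amat_le_iff, latNorm_Amat_le_iff, h₀, ← le_antisymm_iff]

theorem invMmulVec_single_castSucc (i : Fin m) (a : ℤ) :
    invMmulVec (Pi.single i.castSucc a) = Pi.single i.castSucc a := by
  ext j
  induction j using Fin.lastCases <;> simp [invMmulVec, Pi.single_apply]

theorem invMmulVec_single_last (a : ℤ) :
    invMmulVec (Pi.single (Fin.last m) a) =
      fun j : Fin (m + 1) => if (j : ℕ) = m then 2 * a else -a := by
  ext j
  induction j using Fin.lastCases <;> simp [invMmulVec, Fin.castSucc_ne_last, (Fin.isLt _).ne]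

theorem exists_eq_invMmulVec_single_iff (v : Fin (m + 1) → ℤ) :
    (∃ j, v = invMmulVec (Pi.single j 1) ∨ v = invMmulVec (Pi.single j (-1))) ↔
      (∃ i : Fin (m + 1), (i : ℕ) < m ∧
          (v = (fun j => if j = i then 1 else 0) ∨ v = (fun j => if j = i then -1 else 0))) ∨
        v = (fun j : Fin (m + 1) => if (j : ℕ) = m then 2 else -1) ∨
        v = (fun j : Fin (m + 1) => if (j : ℕ) = m then -2 else 1) := by
  have hsingle (i : Fin (m + 1)) (a : ℤ) : (fun j => if j = i then a else 0) = Pi.single i a :=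
    funext fun j => (Pi.single_apply i a j).symm
  simp only [Fin.exists_fin_succ', invMmulVec_single_castSucc, invMmulVec_single_last, hsingle,
    Fin.val_castSucc, Fin.isLt, true_and, Fin.val_last, lt_irrefl, false_and, or_false]
  norm_num

end Mmat

/-- For `n ≥ 5` and `A = 2^(1/n) • M`, the shortest nonzero integer vectors of `A` are
exactly the `2n` vectors `±e₁, …, ±e_{n-1}, ±(2eₙ − (e₁ + ⋯ + e_{n-1}))`. -/
theorem systole_set_Amat {n : ℕ} (hn : 5 ≤ n) :
    {v : Fin n → ℤ | v ≠ 0 ∧ latNorm (Amat n) v = syst (Amat n)} =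
      {v : Fin n → ℤ |
        (∃ i : Fin n, (i : ℕ) < n - 1 ∧
          (v = (fun j : Fin n => if j = i then 1 else 0) ∨
           v = (fun j : Fin n => if j = i then -1 else 0))) ∨
        v = (fun j : Fin n => if (j : ℕ) = n - 1 then 2 else -1) ∨
        v = (fun j : Fin n => if (j : ℕ) = n - 1 then -2 else 1)} := by
  obtain ⟨m, rfl⟩ : ∃ m, n = m + 1 := ⟨n - 1, by omega⟩
  have hm : 4 ≤ m := by omega
  ext v
  simp only [Set.mem_ofPred_eq, Nat.add_sub_cancel, latNorm_Amat_eq_syst_iff hm,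
    ← exists_eq_invMmulVec_single_iff, ← sum_sq_twoMmulVec_eq_four_iff hm]
  refine and_iff_right_of_imp fun h hv => ?_
  rw [hv, ← invMmulVec_zero, sum_sq_twoMmulVec_invMmulVec] at h
  simp at h
end

section
/- Let n ≥ 5 and let A = 2^{1/n}·M, where M is the real n×n matrix with M_{ii} = 1 for 1 ≤ i ≤ n−1, M_{in} = 1/2 for 1 ≤ i ≤ n, and all other entries 0. Then the subgroup of ℤⁿ generated by the set S(A) of shortest vectors equals {v ∈ ℤⁿ : the last coordinate of v is even}; in particular this subgroup has index 2 in ℤⁿ, so S(A) generates a finite-index subgroup of ℤⁿ but does not generate ℤⁿ. -/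
open Matrix Finset

namespace Int

lemma one_le_sq_of_ne_zero {x : ℤ} (hx : x ≠ 0) : 1 ≤ x ^ 2 :=
  (one_le_sq_iff_one_le_abs x).2 (Int.one_le_abs hx)

lemma four_le_sq_of_even {x : ℤ} (hx : Even x) (h0 : x ≠ 0) : 4 ≤ x ^ 2 := by
  obtain ⟨k, rfl⟩ := hx
  have hk : 1 ≤ k ^ 2 := one_le_sq_of_ne_zero (by rintro rfl; simp at h0)
  linarith [show (k + k) ^ 2 = 4 * k ^ 2 by ring]

lemma one_le_sq_of_odd {x : ℤ} (hx : Odd x) : 1 ≤ x ^ 2 :=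
  one_le_sq_of_ne_zero (by rintro rfl; simp at hx)

end Int

namespace Amat

variable {m : ℕ}

lemma Mmat_apply_castSucc (i : Fin (m + 1)) (j : Fin m) :
    Mmat (m + 1) i j.castSucc = if i = j.castSucc then 1 else 0 := by
  simp [Mmat, j.is_lt.ne]

lemma Mmat_apply_last (i : Fin (m + 1)) : Mmat (m + 1) i (Fin.last m) = 1 / 2 := by
  simp [Mmat]

lemma Mmat_mulVec_castSucc (x : Fin (m + 1) → ℝ) (i : Fin m) :
    (Mmat (m + 1) *ᵥ x) i.castSucc = x i.castSucc + x (Fin.last m) / 2 := by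
  simp [mulVec, dotProduct, Fin.sum_univ_castSucc, Mmat_apply_castSucc, Mmat_apply_last]
  ring

lemma Mmat_mulVec_last (x : Fin (m + 1) → ℝ) :
    (Mmat (m + 1) *ᵥ x) (Fin.last m) = x (Fin.last m) / 2 := by
  simp [mulVec, dotProduct, Fin.sum_univ_castSucc, Mmat_apply_castSucc, Mmat_apply_last,
    eq_comm (a := Fin.last m)]
  ring

/-- `4 ‖M v‖²`, an integer. -/
def quadForm (v : Fin (m + 1) → ℤ) : ℤ :=
  ∑ i : Fin m, (2 * v i.castSucc + v (Fin.last m)) ^ 2 + v (Fin.last m) ^ 2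

lemma quadForm_nonneg (v : Fin (m + 1) → ℤ) : 0 ≤ quadForm v := by
  unfold quadForm
  positivity

lemma latNorm_smul_Mmat {c : ℝ} (hc : 0 ≤ c) (v : Fin (m + 1) → ℤ) :
    latNorm (c • Mmat (m + 1)) v = c / 2 * √(quadForm v : ℝ) := by
  have hsum :
      ∑ i, ((c • Mmat (m + 1)) *ᵥ fun k => (v k : ℝ)) i ^ 2 = (c / 2) ^ 2 * quadForm v := by
    simp only [smul_mulVec, Pi.smul_apply, smul_eq_mul, Fin.sum_univ_castSucc,
      Mmat_mulVec_castSucc, Mmat_mulVec_last, quadForm]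
    push_cast
    rw [mul_add, mul_sum]
    congr 1
    · exact sum_congr rfl fun i _ => by ring
    · ring
  rw [latNorm, eNorm, hsum, Real.sqrt_mul (sq_nonneg _), Real.sqrt_sq (by positivity)]

lemma le_quadForm_of_odd {v : Fin (m + 1) → ℤ} (ht : Odd (v (Fin.last m))) :
    (m + 1 : ℤ) ≤ quadForm v := by
  have hsum : (m : ℤ) ≤ ∑ i : Fin m, (2 * v i.castSucc + v (Fin.last m)) ^ 2 := by
    simpa using card_nsmul_le_sum (univ : Finset (Fin m)) _ 1
      fun i _ => Int.one_le_sq_of_odd ((even_two_mul _).add_odd ht)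
  unfold quadForm
  linarith [Int.one_le_sq_of_odd ht]

lemma four_le_quadForm_of_even {v : Fin (m + 1) → ℤ} (ht : Even (v (Fin.last m)))
    (hv : v ≠ 0) : 4 ≤ quadForm v := by
  unfold quadForm
  have hsum_nonneg : 0 ≤ ∑ i : Fin m, (2 * v i.castSucc + v (Fin.last m)) ^ 2 := by positivity
  by_cases ht0 : v (Fin.last m) = 0
  · obtain ⟨i, hi⟩ : ∃ i : Fin m, v i.castSucc ≠ 0 := by
      by_contra! h
      exact hv (funext fun j => Fin.lastCases ht0 h j)
    have hterm : 4 ≤ (2 * v i.castSucc + v (Fin.last m)) ^ 2 := by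
      rw [ht0, add_zero]
      exact Int.four_le_sq_of_even (even_two_mul _) (by simpa using hi)
    linarith [single_le_sum (fun j _ => sq_nonneg (2 * v (Fin.castSucc j) + v (Fin.last m)))
      (mem_univ i), sq_nonneg (v (Fin.last m))]
  · linarith [Int.four_le_sq_of_even ht ht0]

lemma four_le_quadForm (hm : 3 ≤ m) {v : Fin (m + 1) → ℤ} (hv : v ≠ 0) :
    4 ≤ quadForm v := by
  rcases Int.even_or_odd (v (Fin.last m)) with ht | ht
  · exact four_le_quadForm_of_even ht hv
  · linarith [le_quadForm_of_odd ht, show (3 : ℤ) ≤ m by exact_mod_cast hm]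

lemma even_last_of_quadForm_eq_four (hm : 4 ≤ m) {v : Fin (m + 1) → ℤ}
    (hv : quadForm v = 4) : Even (v (Fin.last m)) := by
  by_contra ht
  linarith [le_quadForm_of_odd (Int.not_even_iff_odd.1 ht),
    show (4 : ℤ) ≤ m by exact_mod_cast hm]

lemma quadForm_single_castSucc (i : Fin m) : quadForm (Pi.single i.castSucc 1) = 4 := by
  simp [quadForm, Pi.single_apply]

/-- The vector `(-1, …, -1, 2)`. -/
def spike (m : ℕ) : Fin (m + 1) → ℤ :=
  Fin.lastCases (motive := fun _ => ℤ) 2 fun _ => -1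

lemma spike_ne_zero : spike m ≠ 0 := fun h => by simpa [spike] using congrFun h (Fin.last m)

lemma quadForm_spike : quadForm (spike m) = 4 := by
  simp [quadForm, spike]

lemma sqrt_quadForm_eq_two_iff (v : Fin (m + 1) → ℤ) :
    √(quadForm v : ℝ) = 2 ↔ quadForm v = 4 := by
  rw [Real.sqrt_eq_iff_eq_sq (by exact_mod_cast quadForm_nonneg v) zero_le_two]
  norm_cast

lemma syst_smul_Mmat (hm : 3 ≤ m) {c : ℝ} (hc : 0 ≤ c) : syst (c • Mmat (m + 1)) = c := by
  refine IsLeast.csInf_eq ⟨⟨spike m, spike_ne_zero, ?_⟩, ?_⟩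
  · rw [latNorm_smul_Mmat hc, (sqrt_quadForm_eq_two_iff _).2 quadForm_spike]
    ring
  · rintro r ⟨v, hv, rfl⟩
    have h4 : ((2 : ℤ) : ℝ) ^ 2 ≤ quadForm v := by exact_mod_cast four_le_quadForm hm hv
    have h2 : 2 ≤ √(quadForm v : ℝ) := Real.le_sqrt_of_sq_le (by exact_mod_cast h4)
    calc c = c / 2 * 2 := by ring
      _ ≤ c / 2 * √(quadForm v : ℝ) := by gcongr
      _ = latNorm (c • Mmat (m + 1)) v := (latNorm_smul_Mmat hc v).symm

lemma latNorm_eq_syst_iff (hm : 3 ≤ m) {c : ℝ} (hc : 0 < c) (v : Fin (m + 1) → ℤ) :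
    latNorm (c • Mmat (m + 1)) v = syst (c • Mmat (m + 1)) ↔ quadForm v = 4 := by
  rw [syst_smul_Mmat hm hc.le, latNorm_smul_Mmat hc.le, ← sqrt_quadForm_eq_two_iff]
  have hc2 : c / 2 ≠ 0 := by positivity
  refine ⟨fun h => mul_left_cancel₀ hc2 (h.trans (by ring)), fun h => ?_⟩
  rw [h]
  ring

def evenLast (m : ℕ) : AddSubgroup (Fin (m + 1) → ℤ) :=
  (AddSubgroup.zmultiples 2).comap (Pi.evalAddMonoidHom (fun _ => ℤ) (Fin.last m))

lemma mem_evenLast {v : Fin (m + 1) → ℤ} : v ∈ evenLast m ↔ Even (v (Fin.last m)) := by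
  simp [evenLast, Int.mem_zmultiples_iff, even_iff_two_dvd]

lemma index_evenLast : (evenLast m).index = 2 := by
  rw [evenLast, AddSubgroup.index_comap_of_surjective _ (Function.surjective_eval _),
    Int.index_zmultiples]
  rfl

lemma single_last_two_eq :
    Pi.single (Fin.last m) 2 = spike m + ∑ i : Fin m, Pi.single i.castSucc 1 := by
  ext j
  induction j using Fin.lastCases <;> simp [spike, Pi.single_apply]

lemma evenLast_le {H : AddSubgroup (Fin (m + 1) → ℤ)}
    (hsingle : ∀ i : Fin m, Pi.single i.castSucc 1 ∈ H) (hspike : spike m ∈ H) :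
    evenLast m ≤ H := by
  intro v hv
  obtain ⟨k, hk⟩ := mem_evenLast.1 hv
  have hlast : Pi.single (Fin.last m) 2 ∈ H := by
    rw [single_last_two_eq]
    exact add_mem hspike (sum_mem fun i _ => hsingle i)
  rw [← univ_sum_single v, Fin.sum_univ_castSucc, hk]
  refine add_mem (sum_mem fun i _ => ?_) ?_
  · simpa [← Pi.single_smul'] using zsmul_mem (hsingle i) (v i.castSucc)
  · simpa [← Pi.single_smul', mul_two] using zsmul_mem hlast k

lemma closure_quadForm_eq_four (hm : 4 ≤ m) :
    AddSubgroup.closure {w : Fin (m + 1) → ℤ | w ≠ 0 ∧ quadForm w = 4} = evenLast m := by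
  refine le_antisymm ?_ ?_
  · rw [AddSubgroup.closure_le]
    rintro w ⟨-, hw⟩
    exact mem_evenLast.2 (even_last_of_quadForm_eq_four hm hw)
  · refine evenLast_le (fun i => AddSubgroup.subset_closure ⟨?_, quadForm_single_castSucc i⟩)
      (AddSubgroup.subset_closure ⟨spike_ne_zero, quadForm_spike⟩)
    exact Pi.single_ne_zero_iff.2 one_ne_zero

end Amat

open Amat

/-- For `n ≥ 5` and `A = 2^(1/n) • M`, the subgroup of `ℤⁿ` generated by the set of
shortest vectors of `A` is exactly the set of integer vectors whose last coordinate
is even; in particular it has index `2` in `ℤⁿ`, so it is of finite index but proper. -/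
theorem closure_systoles_Amat {n : ℕ} (hn : 5 ≤ n) :
    (∀ v : Fin n → ℤ,
        v ∈ AddSubgroup.closure
            {w : Fin n → ℤ | w ≠ 0 ∧ latNorm (Amat n) w = syst (Amat n)} ↔
          Even (v ⟨n - 1, by omega⟩)) ∧
      (AddSubgroup.closure
          {w : Fin n → ℤ | w ≠ 0 ∧ latNorm (Amat n) w = syst (Amat n)}).index = 2 ∧
      AddSubgroup.closure
          {w : Fin n → ℤ | w ≠ 0 ∧ latNorm (Amat n) w = syst (Amat n)} ≠ ⊤ := by
  obtain ⟨m, rfl⟩ : ∃ m, n = m + 1 := ⟨n - 1, by omega⟩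
  have hm : 4 ≤ m := by omega
  have hshortest :
      {w : Fin (m + 1) → ℤ | w ≠ 0 ∧ latNorm (Amat (m + 1)) w = syst (Amat (m + 1))}
        = {w | w ≠ 0 ∧ quadForm w = 4} := by
    ext w
    rw [Amat, Set.mem_ofPred_eq, Set.mem_ofPred_eq,
      latNorm_eq_syst_iff (by omega) (Real.rpow_pos_of_pos two_pos _)]
  rw [hshortest, closure_quadForm_eq_four hm]
  refine ⟨fun v => mem_evenLast, index_evenLast, fun htop => ?_⟩
  simpa [htop] using index_evenLast (m := m)
end

section
/- Let n ≥ 5, let A = 2^{1/n}·M with M the real n×n matrix with M_{ii} = 1 for 1 ≤ i ≤ n−1, M_{in} = 1/2 for 1 ≤ i ≤ n, and all other entries 0, and let H be a real n×n diagonal matrix with positive diagonal entries and determinant 1. Then the set S(HA) of shortest integer vectors of HA generates a finite-index subgroup of ℤⁿ if and only if H is the identity matrix. -/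
/-!
The integer matrix `2M` maps `ℤⁿ` bijectively onto the integer vectors all of whose coordinates
have the parity of the last one, `v_L`, and `‖H A v‖` is a fixed multiple of `√q(2Mv)` with
`q(x) = ∑ (aᵢ xᵢ)²`. If `v_L` is odd, every coordinate of `2Mv` is odd and
`q(2Mv) ≥ n · min aᵢ² > 4 · min aᵢ²` since `n ≥ 5`, while `q(2eₖ) = 4 aₖ²`; if `v_L` is even,
`q(2Mv) ≥ 4 aⱼ²` whenever `(2Mv)ⱼ ≠ 0`. So a shortest vector has `(2Mv)ⱼ = 0` unless `aⱼ` is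
minimal. If the shortest vectors generate a finite-index subgroup, no surjection `v ↦ (2Mv)ⱼ`
onto `ℤ` can vanish on all of them, so every `aⱼ` is minimal, and `det H = 1` forces `H = 1`.
Conversely, for `H = 1` all `M⁻¹ eᵢ` are shortest, and they generate `{v | v_L even}`, a subgroup
of index `2`.
-/

open Finset Matrix

section Systole

variable {n : ℕ} {A : Matrix (Fin n) (Fin n) ℝ} {v : Fin n → ℤ}

theorem syst_le_latNorm (hv : v ≠ 0) : syst A ≤ latNorm A v := by
  unfold syst
  refine csInf_le ⟨0, ?_⟩ ⟨v, hv, rfl⟩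
  rintro _ ⟨w, -, rfl⟩
  exact Real.sqrt_nonneg _

theorem latNorm_eq_syst_iff (hv : v ≠ 0) :
    latNorm A v = syst A ↔ ∀ w ≠ 0, latNorm A v ≤ latNorm A w := by
  refine ⟨fun h w hw => h ▸ syst_le_latNorm hw, fun h => ?_⟩
  refine (IsLeast.csInf_eq (s := {r | ∃ w, w ≠ 0 ∧ r = latNorm A w}) ⟨⟨v, hv, rfl⟩, ?_⟩).symm
  rintro _ ⟨w, hw, rfl⟩
  exact h w hw

end Systole

section Index

variable {G G' : Type*} [AddGroup G] [AddGroup G'] {H : AddSubgroup G}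

theorem not_le_ker_of_index_ne_zero [Infinite G'] (hH : H.index ≠ 0) {f : G →+ G'}
    (hf : Function.Surjective f) : ¬ H ≤ f.ker := by
  intro hle
  have hdvd := AddSubgroup.index_dvd_of_le hle
  rw [AddSubgroup.index_ker, AddMonoidHom.range_eq_top_of_surjective f hf,
    AddSubgroup.card_top, Nat.card_eq_zero_of_infinite, zero_dvd_iff] at hdvd
  exact hH hdvd

theorem index_ne_zero_of_ker_le [Finite G'] (f : G →+ G') (h : f.ker ≤ H) : H.index ≠ 0 := by
  refine ne_zero_of_dvd_ne_zero ?_ (AddSubgroup.index_dvd_of_le h)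
  rw [AddSubgroup.index_ker]
  exact Nat.card_pos.ne'

end Index

section TwiceM

variable {ι : Type*} [DecidableEq ι]

/-- The matrix `2M` acting on `ℤ^ι`, the index `L` playing the role of the last coordinate. -/
def twiceM (L : ι) : (ι → ℤ) →+ (ι → ℤ) :=
  AddMonoidHom.mk' (fun v i => (if i = L then 0 else 2 * v i) + v L) fun v w => by
    ext i; simp only [Pi.add_apply]; split_ifs <;> ring

variable {L : ι}

theorem twiceM_apply (v : ι → ℤ) (i : ι) :
    twiceM L v i = (if i = L then 0 else 2 * v i) + v L := rfl

theorem even_twiceM_apply_iff {v : ι → ℤ} {i : ι} : Even (twiceM L v i) ↔ Even (v L) := by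
  rw [twiceM_apply]; split_ifs <;> simp [Int.even_add]

theorem odd_twiceM_apply {v : ι → ℤ} (h : Odd (v L)) (i : ι) : Odd (twiceM L v i) := by
  rw [← Int.not_even_iff_odd, even_twiceM_apply_iff, Int.not_even_iff_odd]
  exact h

theorem twiceM_injective : Function.Injective (twiceM L) := by
  refine (injective_iff_map_eq_zero _).2 fun v hv => ?_
  have hL : v L = 0 := by simpa [twiceM_apply] using congr_fun hv L
  ext i
  by_cases hi : i = L
  · exact hi ▸ hL
  · simpa [twiceM_apply, hL, hi] using congr_fun hv i

theorem twiceM_single_self_apply (k : ℤ) (i : ι) : twiceM L (Pi.single L k) i = k := by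
  by_cases hi : i = L <;> simp [twiceM_apply, hi]

def shortVec (L i : ι) : ι → ℤ :=
  if i = L then fun j => if j = L then 2 else -1 else Pi.single i 1

theorem twiceM_shortVec (i : ι) : twiceM L (shortVec L i) = Pi.single i 2 := by
  ext j
  by_cases hi : i = L
  · subst hi; by_cases hj : j = i <;> simp [twiceM_apply, shortVec, hj]
  · by_cases hj : j = L
    · simp [twiceM_apply, shortVec, hi, hj, Ne.symm hi]
    · by_cases hji : j = i <;> simp [twiceM_apply, shortVec, hi, hj, hji]

theorem shortVec_ne_zero (i : ι) : shortVec L i ≠ 0 := by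
  intro h
  simpa [h] using congr_fun (twiceM_shortVec (L := L) i) i

theorem eq_sum_zsmul_shortVec [Fintype ι] {v : ι → ℤ} (h : Even (v L)) :
    v = ∑ i, (twiceM L v i / 2) • shortVec L i := by
  apply twiceM_injective (L := L)
  ext j
  have h2 : 2 ∣ twiceM L v j := even_iff_two_dvd.1 (even_twiceM_apply_iff.2 h)
  simp only [map_sum, map_zsmul, twiceM_shortVec, Finset.sum_apply, Pi.smul_apply,
    Pi.single_apply, smul_eq_mul, mul_ite, mul_zero, sum_ite_eq, mem_univ, if_true]
  exact (Int.ediv_mul_cancel h2).symm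

end TwiceM

section WeightedNormSq

variable {ι : Type*} [Fintype ι] {a : ι → ℝ} {x : ι → ℤ}

def weightedNormSq (a : ι → ℝ) (x : ι → ℤ) : ℝ := ∑ i, (a i * x i) ^ 2

theorem weightedNormSq_nonneg : 0 ≤ weightedNormSq a x := sum_nonneg fun _ _ => sq_nonneg _

theorem weightedNormSq_single [DecidableEq ι] (i : ι) (m : ℤ) :
    weightedNormSq a (Pi.single i m) = (a i * m) ^ 2 := by
  rw [weightedNormSq, sum_eq_single i (fun j _ hj => by simp [hj]) (by simp)]
  simp

theorem four_mul_sq_le_weightedNormSq_of_even {j : ι} (hx : Even (x j)) (hx0 : x j ≠ 0) :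
    4 * a j ^ 2 ≤ weightedNormSq a x := by
  obtain ⟨k, hk⟩ := hx
  have hk0 : k ≠ 0 := by rintro rfl; simp_all
  have h1 : (1 : ℝ) ≤ (k : ℝ) ^ 2 := by
    exact_mod_cast (one_le_sq_iff_one_le_abs k).2 (Int.one_le_abs hk0)
  calc 4 * a j ^ 2 ≤ (a j * x j) ^ 2 := by rw [hk]; push_cast; nlinarith [sq_nonneg (a j)]
    _ ≤ weightedNormSq a x :=
      single_le_sum (f := fun i => (a i * x i) ^ 2) (fun _ _ => sq_nonneg _) (mem_univ j)

theorem card_mul_sq_le_weightedNormSq_of_odd {t : ℝ} (ht : 0 ≤ t) (hta : ∀ i, t ≤ a i)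
    (hx : ∀ i, Odd (x i)) : Fintype.card ι * t ^ 2 ≤ weightedNormSq a x := by
  rw [← nsmul_eq_mul, ← card_univ]
  refine card_nsmul_le_sum _ _ _ fun i _ => ?_
  have hx0 : x i ≠ 0 := by rintro h; simpa [h] using hx i
  have h1 : (1 : ℝ) ≤ (x i : ℝ) ^ 2 := by
    exact_mod_cast (one_le_sq_iff_one_le_abs _).2 (Int.one_le_abs hx0)
  calc t ^ 2 ≤ a i ^ 2 := pow_le_pow_left₀ ht (hta i) 2
    _ ≤ a i ^ 2 * (x i : ℝ) ^ 2 := le_mul_of_one_le_right (sq_nonneg _) h1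
    _ = (a i * x i) ^ 2 := (mul_pow _ _ _).symm

end WeightedNormSq

section MinimalVectors

variable {ι : Type*} [Fintype ι] [DecidableEq ι] {a : ι → ℝ} {L : ι}

def minimalVectors (a : ι → ℝ) (L : ι) : Set (ι → ℤ) :=
  {v | v ≠ 0 ∧ ∀ w ≠ 0, weightedNormSq a (twiceM L v) ≤ weightedNormSq a (twiceM L w)}

theorem weightedNormSq_twiceM_shortVec (i : ι) :
    weightedNormSq a (twiceM L (shortVec L i)) = 4 * a i ^ 2 := by
  rw [twiceM_shortVec, weightedNormSq_single]; push_cast; ring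

theorem four_mul_sq_le_weightedNormSq_twiceM (hcard : 4 ≤ Fintype.card ι) {t : ℝ} (ht : 0 ≤ t)
    (hta : ∀ i, t ≤ a i) {v : ι → ℤ} (hv : v ≠ 0) :
    4 * t ^ 2 ≤ weightedNormSq a (twiceM L v) := by
  rcases Int.even_or_odd (v L) with heven | hodd
  · obtain ⟨j, hj⟩ : ∃ j, twiceM L v j ≠ 0 := by
      by_contra! h
      exact hv ((map_eq_zero_iff _ twiceM_injective).1 (funext h))
    calc 4 * t ^ 2 ≤ 4 * a j ^ 2 := by gcongr; exact hta j
      _ ≤ _ := four_mul_sq_le_weightedNormSq_of_even (even_twiceM_apply_iff.2 heven) hj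
  · calc 4 * t ^ 2 ≤ Fintype.card ι * t ^ 2 := by gcongr; exact_mod_cast hcard
      _ ≤ _ := card_mul_sq_le_weightedNormSq_of_odd ht hta (odd_twiceM_apply hodd)

theorem even_of_weightedNormSq_twiceM_le (hcard : 5 ≤ Fintype.card ι) {t : ℝ} (ht : 0 < t)
    (hta : ∀ i, t ≤ a i) {v : ι → ℤ} (h : weightedNormSq a (twiceM L v) ≤ 4 * t ^ 2) :
    Even (v L) := by
  by_contra hodd
  have hlow := card_mul_sq_le_weightedNormSq_of_odd ht.le hta
    (odd_twiceM_apply (L := L) (Int.not_even_iff_odd.1 hodd))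
  have hcard' : (5 : ℝ) ≤ Fintype.card ι := by exact_mod_cast hcard
  nlinarith [pow_pos ht 2]

theorem le_of_mem_minimalVectors (hcard : 5 ≤ Fintype.card ι) (ha : ∀ i, 0 < a i)
    {v : ι → ℤ} (hv : v ∈ minimalVectors a L) {j : ι} (hj : twiceM L v j ≠ 0) (i : ι) :
    a j ≤ a i := by
  have hshort (k : ι) : weightedNormSq a (twiceM L v) ≤ 4 * a k ^ 2 :=
    weightedNormSq_twiceM_shortVec (L := L) k ▸ hv.2 _ (shortVec_ne_zero k)
  have : Nonempty ι := ⟨i⟩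
  obtain ⟨k, hk⟩ := Finite.exists_min a
  have heven := even_of_weightedNormSq_twiceM_le hcard (ha k) hk (hshort k)
  have hj' := four_mul_sq_le_weightedNormSq_of_even (a := a) (even_twiceM_apply_iff.2 heven) hj
  have hsq : a j ^ 2 ≤ a i ^ 2 := by linarith [hshort i]
  exact (pow_le_pow_iff_left₀ (ha j).le (ha i).le two_ne_zero).1 hsq

theorem forall_eq_of_index_closure_minimalVectors_ne_zero (hcard : 5 ≤ Fintype.card ι)
    (ha : ∀ i, 0 < a i) (h : (AddSubgroup.closure (minimalVectors a L)).index ≠ 0) (i j : ι) :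
    a i = a j := by
  have hle (j i : ι) : a j ≤ a i := by
    have hψ : Function.Surjective ((Pi.evalAddMonoidHom (fun _ => ℤ) j).comp (twiceM L)) :=
      fun k => ⟨Pi.single L k, twiceM_single_self_apply k j⟩
    obtain ⟨v, hv, hvj⟩ : ∃ v ∈ minimalVectors a L, twiceM L v j ≠ 0 := by
      by_contra! h'
      exact not_le_ker_of_index_ne_zero h hψ ((AddSubgroup.closure_le _).2 h')
    exact le_of_mem_minimalVectors hcard ha hv hvj i
  exact le_antisymm (hle i j) (hle j i)

theorem index_closure_minimalVectors_ne_zero (hcard : 4 ≤ Fintype.card ι) {t : ℝ} (ht : 0 ≤ t)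
    (hat : ∀ i, a i = t) : (AddSubgroup.closure (minimalVectors a L)).index ≠ 0 := by
  have hmem (i : ι) : shortVec L i ∈ minimalVectors a L := by
    refine ⟨shortVec_ne_zero i, fun w hw => ?_⟩
    rw [weightedNormSq_twiceM_shortVec, hat]
    exact four_mul_sq_le_weightedNormSq_twiceM hcard ht (fun k => (hat k).ge) hw
  refine index_ne_zero_of_ker_le
    ((Int.castAddHom (ZMod 2)).comp (Pi.evalAddMonoidHom (fun _ => ℤ) L)) fun v hv => ?_
  have hL : Even (v L) := ZMod.intCast_eq_zero_iff_even.1 hv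
  rw [eq_sum_zsmul_shortVec hL]
  exact sum_mem fun i _ => AddSubgroup.zsmul_mem _ (AddSubgroup.subset_closure (hmem i)) _

end MinimalVectors

section Amat

variable {m : ℕ} {a : Fin (m + 1) → ℝ}

theorem Mmat_mulVec (v : Fin (m + 1) → ℤ) :
    Mmat (m + 1) *ᵥ (fun i => (v i : ℝ)) = fun i => (twiceM (Fin.last m) v i : ℝ) / 2 := by
  ext i
  have hlast (j : Fin (m + 1)) : ((j : ℕ) = m + 1 - 1) ↔ j = Fin.last m := by
    simp [Fin.ext_iff]
  simp only [Mmat, mulVec, dotProduct, of_apply, hlast, twiceM_apply, ite_mul, one_mul, zero_mul]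
  by_cases hi : i = Fin.last m <;> simp [hi, sum_ite, filter_eq'] <;> ring

theorem latNorm_diagonal_mul_Amat (v : Fin (m + 1) → ℤ) :
    latNorm (diagonal a * Amat (m + 1)) v =
      (2 : ℝ) ^ ((1 : ℝ) / (m + 1 : ℕ)) / 2 * √(weightedNormSq a (twiceM (Fin.last m) v)) := by
  set c : ℝ := (2 : ℝ) ^ ((1 : ℝ) / (m + 1 : ℕ))
  have hc : 0 ≤ c / 2 := by positivity
  have hcoord (i : Fin (m + 1)) : ((diagonal a * Amat (m + 1)) *ᵥ fun i => (v i : ℝ)) i =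
      c / 2 * (a i * (twiceM (Fin.last m) v i : ℝ)) := by
    rw [← mulVec_mulVec, mulVec_diagonal, Amat, smul_mulVec, Mmat_mulVec]
    simp only [Pi.smul_apply, smul_eq_mul, c]
    ring
  rw [latNorm, eNorm, ← Real.sqrt_sq hc, ← Real.sqrt_mul (sq_nonneg _), weightedNormSq, mul_sum]
  simp only [hcoord, mul_pow]

theorem latNorm_diagonal_mul_Amat_le_iff {v w : Fin (m + 1) → ℤ} :
    latNorm (diagonal a * Amat (m + 1)) v ≤ latNorm (diagonal a * Amat (m + 1)) w ↔
      weightedNormSq a (twiceM (Fin.last m) v) ≤ weightedNormSq a (twiceM (Fin.last m) w) := by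
  rw [latNorm_diagonal_mul_Amat, latNorm_diagonal_mul_Amat,
    mul_le_mul_iff_right₀ (by positivity), Real.sqrt_le_sqrt_iff weightedNormSq_nonneg]

theorem setOf_latNorm_eq_syst :
    {v | v ≠ 0 ∧ latNorm (diagonal a * Amat (m + 1)) v = syst (diagonal a * Amat (m + 1))} =
      minimalVectors a (Fin.last m) := by
  ext v
  refine and_congr_right fun hv => ?_
  simp only [latNorm_eq_syst_iff hv, latNorm_diagonal_mul_Amat_le_iff]

end Amat

theorem eq_one_of_forall_eq_of_prod_eq_one {ι : Type*} [Fintype ι] {a : ι → ℝ}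
    (ha : ∀ i, 0 ≤ a i) (hprod : ∏ i, a i = 1) (h : ∀ i j, a i = a j) : a = 1 := by
  funext i
  have : Nonempty ι := ⟨i⟩
  have hpow : a i ^ Fintype.card ι = 1 := by
    rw [← hprod, ← card_univ, ← prod_const]
    exact prod_congr rfl fun j _ => h i j
  exact (pow_eq_one_iff_of_nonneg (ha i) Fintype.card_ne_zero).1 hpow

/-- For `n ≥ 5`, `A = 2^(1/n) • M` and `H` diagonal with positive entries and determinant
`1`: the set of shortest integer vectors of `H A` generates a finite-index subgroup of
`ℤⁿ` if and only if `H` is the identity matrix. -/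
theorem wellRounded_iff_id {n : ℕ} (hn : 5 ≤ n) (a : Fin n → ℝ) (ha : ∀ i, 0 < a i)
    (hdet : (Matrix.diagonal a).det = 1) :
    (AddSubgroup.closure
        {v : Fin n → ℤ | v ≠ 0 ∧
          latNorm (Matrix.diagonal a * Amat n) v =
            syst (Matrix.diagonal a * Amat n)}).index ≠ 0 ↔
      Matrix.diagonal a = 1 := by
  obtain ⟨m, rfl⟩ : ∃ m, n = m + 1 := ⟨n - 1, by omega⟩
  have hcard : 5 ≤ Fintype.card (Fin (m + 1)) := by simpa using hn
  rw [setOf_latNorm_eq_syst, ← diagonal_one, diagonal_injective.eq_iff]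
  constructor
  · intro h
    rw [det_diagonal] at hdet
    exact eq_one_of_forall_eq_of_prod_eq_one (fun i => (ha i).le) hdet
      (forall_eq_of_index_closure_minimalVectors_ne_zero hcard ha h)
  · rintro rfl
    exact index_closure_minimalVectors_ne_zero (by omega) zero_le_one fun _ => rfl
end
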